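/- In the cascading-failure model, suppose G₀ is bipartite with the two sides of the bipartition exactly V_src and V_ld, and α ≥ |V_src|. Then for every set S ⊆ V, the induced subgraph G₀ − S on V \ S satisfies F(G₀ − S) = G₀ − S, and hence F*(G₀ − S) = G₀ − S: removing any set of vertices triggers no cascading edge failures, so a load node becomes disconnected only if it is attacked or all of its source neighbors are removed. -/

import Mathlib

open scoped Classical

noncomputable section

variable {V : Type*} [Fintype V] [DecidableEq V]

/-- The number of shortest paths between `s` and `t` in `G` (σ_G(s,t)). -/
def numSP (G : SimpleGraph V) (s t : V) : ℕ :=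
  Nat.card {w : G.Walk s t // w.length = G.dist s t}

/-- The number of shortest paths between `s` and `t` in `G` passing through edge `e`
(σ_G(s,t | e)). -/
def numSPthru (G : SimpleGraph V) (s t : V) (e : Sym2 V) : ℕ :=
  Nat.card {w : G.Walk s t // w.length = G.dist s t ∧ e ∈ w.edges}

/-- `N_G(t)`: the vertices of `Vsrc \ {t}` reachable from `t` in `G` at minimum distance
from `t`. -/
def nearestSources (Vsrc : Finset V) (G : SimpleGraph V) (t : V) : Finset V :=
  ((Vsrc.erase t).filter (fun s => G.Reachable t s)).filter
    (fun s => ∀ s' ∈ (Vsrc.erase t).filter (fun s'' => G.Reachable t s''),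
      G.dist t s ≤ G.dist t s')

/-- The load of edge `e` in `G`:
`load_G(e) = Σ_{t ∈ Vld} Σ_{s ∈ N_G(t)} σ_G(s,t|e) / (|N_G(t)|·σ_G(s,t))`. -/
def eload (Vsrc Vld : Finset V) (G : SimpleGraph V) (e : Sym2 V) : ℝ :=
  ∑ t ∈ Vld, ∑ s ∈ nearestSources Vsrc G t,
    (numSPthru G s t e : ℝ) / (((nearestSources Vsrc G t).card : ℝ) * (numSP G s t : ℝ))

/-- The failure operator: removes every edge whose current load exceeds its capacity
`c_e = (1+α)·load_{G₀}(e)`. -/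
def Fop (Vsrc Vld : Finset V) (G0 : SimpleGraph V) (α : ℝ) (G : SimpleGraph V) :
    SimpleGraph V where
  Adj u v := G.Adj u v ∧ eload Vsrc Vld G s(u, v) ≤ (1 + α) * eload Vsrc Vld G0 s(u, v)
  symm := by
    constructor
    intro u v h
    refine ⟨h.1.symm, ?_⟩
    rw [Sym2.eq_swap]
    exact h.2
  loopless := ⟨fun v h => G.loopless.irrefl v h.1⟩

/-- `F*(G)`: the fixed point reached by iterating the failure operator (reached after at
most `|E|+1 ≤ (card V)^2` applications, since each non-trivial application removes an edge). -/
def Fstar (Vsrc Vld : Finset V) (G0 : SimpleGraph V) (α : ℝ) (G : SimpleGraph V) :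
    SimpleGraph V :=
  (Fop Vsrc Vld G0 α)^[Fintype.card V ^ 2] G

/-- `G − S`: the (induced) subgraph obtained by deleting the vertices of `S`. -/
def deleteVerts (G : SimpleGraph V) (S : Finset V) : SimpleGraph V where
  Adj u v := G.Adj u v ∧ u ∉ S ∧ v ∉ S
  symm := ⟨fun u v h => ⟨h.1.symm, h.2.2, h.2.1⟩⟩
  loopless := ⟨fun v h => G.loopless.irrefl v h.1⟩

/-- `disc(G)`: the number of load nodes from which no source (other than itself) is
reachable in `G`. -/
def disc (Vsrc Vld : Finset V) (G : SimpleGraph V) : ℕ :=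
  (Vld.filter (fun t => ∀ s ∈ Vsrc, s ≠ t → ¬ G.Reachable t s)).card

/-- The payoff `p(V_a,V_d) = disc(F*(G₀ − (V_a \ V_d)))`. -/
def payoff (Vsrc Vld : Finset V) (G0 : SimpleGraph V) (α : ℝ) (Va Vd : Finset V) : ℕ :=
  disc Vsrc Vld (Fstar Vsrc Vld G0 α (deleteVerts G0 (Va \ Vd)))

/-! In a bipartite source/load network every nearest source of a load vertex is a neighbour, and
the unique shortest path to it is a single edge. Hence each edge `{u, v}` with load endpoint `u`
carries load exactly `1 / deg u`, in `G₀` and in every subgraph alike. In a subgraph this is at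
most `1`, while the capacity `(1 + α) / deg_{G₀} u` is at least `1` because
`deg_{G₀} u ≤ |V_src| ≤ α`; so no edge ever fails. -/

namespace SimpleGraph

variable {W : Type*} {G G0 : SimpleGraph W}

theorem IsBipartiteWith.mono {s t : Set W} (h : G0.IsBipartiteWith s t) (hle : G ≤ G0) :
    G.IsBipartiteWith s t :=
  ⟨h.disjoint, fun _ _ hadj => h.mem_of_adj (hle hadj)⟩

theorem Adj.eq_toWalk_of_length_eq_dist {s t : W} (h : G.Adj s t) {w : G.Walk s t}
    (hw : w.length = G.dist s t) : w = h.toWalk :=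
  Walk.eq_of_length_le_one (by rw [hw, dist_eq_one_iff_adj.mpr h]) (by simp)

end SimpleGraph

open SimpleGraph

section

variable {W : Type*} {G : SimpleGraph W}

theorem numSP_of_adj {s t : W} (h : G.Adj s t) : numSP G s t = 1 :=
  Nat.card_eq_one_iff_unique.mpr
    ⟨⟨fun w w' => Subtype.ext <|
        (h.eq_toWalk_of_length_eq_dist w.2).trans (h.eq_toWalk_of_length_eq_dist w'.2).symm⟩,
      ⟨⟨h.toWalk, by simp [dist_eq_one_iff_adj.mpr h]⟩⟩⟩

theorem numSPthru_of_adj [DecidableEq W] {s t : W} (h : G.Adj s t) (e : Sym2 W) :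
    numSPthru G s t e = if e = s(s, t) then 1 else 0 := by
  have hwalk : ∀ w : {w : G.Walk s t // w.length = G.dist s t ∧ e ∈ w.edges},
      w.1 = h.toWalk := fun w => h.eq_toWalk_of_length_eq_dist w.2.1
  split_ifs with he
  · exact Nat.card_eq_one_iff_unique.mpr
      ⟨⟨fun w w' => Subtype.ext ((hwalk w).trans (hwalk w').symm)⟩,
        ⟨⟨h.toWalk, by simp [he, dist_eq_one_iff_adj.mpr h]⟩⟩⟩
  · have : IsEmpty {w : G.Walk s t // w.length = G.dist s t ∧ e ∈ w.edges} :=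
      ⟨fun w => he (by simpa [hwalk w] using w.2.2)⟩
    exact Nat.card_of_isEmpty

theorem deleteVerts_le (G : SimpleGraph W) (S : Finset W) : deleteVerts G S ≤ G :=
  fun _ _ h => h.1

end

variable {G G0 : SimpleGraph V} {Vsrc Vld : Finset V}

/-- A walk from `t` to a source first steps to a neighbour of `t`, itself a source at distance
one, so a nearest source is a neighbour. -/
theorem nearestSources_eq_neighborFinset {t : V} (hnbr : ∀ s, G.Adj t s → s ∈ Vsrc) :
    nearestSources Vsrc G t = G.neighborFinset t := by
  ext s
  simp only [nearestSources, Finset.mem_filter, Finset.mem_erase, mem_neighborFinset]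
  constructor
  · rintro ⟨⟨⟨hst, -⟩, ⟨w⟩⟩, hmin⟩
    cases w with
    | nil => exact absurd rfl hst
    | @cons _ b _ htb p =>
      have hle := hmin b ⟨⟨htb.ne', hnbr b htb⟩, htb.reachable⟩
      have hpos := Reachable.pos_dist_of_ne ⟨Walk.cons htb p⟩ hst.symm
      rw [dist_eq_one_iff_adj.mpr htb] at hle
      exact dist_eq_one_iff_adj.mp (by omega)
  · intro hts
    refine ⟨⟨⟨hts.ne', hnbr s hts⟩, hts.reachable⟩, fun s' hs' => ?_⟩
    rw [dist_eq_one_iff_adj.mpr hts]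
    exact hs'.2.pos_dist_of_ne hs'.1.1.symm

/-- Only the load endpoint `u` routes flow through `s(u, v)`: its unit is split equally among its
neighbours, all of which are nearest sources. -/
theorem eload_of_adj (hG : G.IsBipartiteWith Vsrc Vld) {u v : V} (hu : u ∈ Vld)
    (huv : G.Adj u v) : eload Vsrc Vld G s(u, v) = (G.degree u : ℝ)⁻¹ := by
  have hnbr : ∀ t ∈ Vld, ∀ s, G.Adj t s → s ∈ Vsrc := fun t ht s hts =>
    hG.mem_of_mem_adj' (by exact_mod_cast ht) hts.symm
  have hterm : ∀ t ∈ Vld, ∀ s ∈ G.neighborFinset t,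
      (numSPthru G s t s(u, v) : ℝ) / ((G.neighborFinset t).card * numSP G s t) =
        if t = u ∧ s = v then (G.degree u : ℝ)⁻¹ else 0 := by
    intro t ht s hs
    have hts : G.Adj t s := (mem_neighborFinset G t s).mp hs
    rw [numSPthru_of_adj hts.symm, numSP_of_adj hts.symm, card_neighborFinset_eq_degree]
    by_cases hts' : t = u ∧ s = v
    · obtain ⟨rfl, rfl⟩ := hts'
      simp [Sym2.eq_swap]
    · have hne : s(u, v) ≠ s(s, t) := by
        intro h
        rcases Sym2.eq_iff.mp h with ⟨rfl, -⟩ | ⟨hut, hvs⟩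
        · exact Finset.disjoint_left.mp (by exact_mod_cast hG.disjoint) (hnbr t ht u hts) hu
        · exact hts' ⟨hut.symm, hvs.symm⟩
      simp [hne, hts']
  calc eload Vsrc Vld G s(u, v)
      = ∑ t ∈ Vld, ∑ s ∈ G.neighborFinset t,
          if t = u ∧ s = v then (G.degree u : ℝ)⁻¹ else 0 := by
        refine Finset.sum_congr rfl fun t ht => ?_
        rw [nearestSources_eq_neighborFinset (hnbr t ht)]
        exact Finset.sum_congr rfl (hterm t ht)
    _ = (G.degree u : ℝ)⁻¹ := by simp [ite_and, hu, huv]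

theorem eload_le_capacity (hG0 : G0.IsBipartiteWith Vsrc Vld) (hle : G ≤ G0) {α : ℝ}
    (hα : (Vsrc.card : ℝ) ≤ α) {u v : V} (huv : G.Adj u v) :
    eload Vsrc Vld G s(u, v) ≤ (1 + α) * eload Vsrc Vld G0 s(u, v) := by
  wlog hu : u ∈ Vld generalizing u v
  · have hv : v ∈ Vld := by
      have := hG0.mem_of_adj (hle huv)
      simp only [Finset.mem_coe] at this
      tauto
    simpa only [Sym2.eq_swap] using this huv.symm hv
  have hdeg : 1 ≤ G.degree u := (G.degree_pos_iff_exists_adj u).mpr ⟨v, huv⟩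
  have hdeg0 : G.degree u ≤ G0.degree u := degree_le_of_le hle
  have hdeg0_le : (G0.degree u : ℝ) ≤ 1 + α := by
    have := isBipartiteWith_degree_le' hG0 (by exact_mod_cast hu)
    have : (G0.degree u : ℝ) ≤ Vsrc.card := by exact_mod_cast this
    linarith
  rw [eload_of_adj (hG0.mono hle) hu huv, eload_of_adj hG0 hu (hle huv)]
  calc (G.degree u : ℝ)⁻¹ ≤ 1 := inv_le_one_of_one_le₀ (by exact_mod_cast hdeg)
    _ ≤ (1 + α) * (G0.degree u : ℝ)⁻¹ := by
      rw [← div_eq_mul_inv, one_le_div₀ (by exact_mod_cast hdeg.trans hdeg0)]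
      exact hdeg0_le

theorem Fop_eq_self_of_le (hG0 : G0.IsBipartiteWith Vsrc Vld) (hle : G ≤ G0) {α : ℝ}
    (hα : (Vsrc.card : ℝ) ≤ α) : Fop Vsrc Vld G0 α G = G := by
  ext u v
  exact ⟨And.left, fun huv => ⟨huv, eload_le_capacity hG0 hle hα huv⟩⟩

theorem Fstar_eq_self_of_Fop_eq_self {α : ℝ} (h : Fop Vsrc Vld G0 α G = G) :
    Fstar Vsrc Vld G0 α G = G :=
  Function.iterate_fixed h _

theorem no_cascade_of_bipartite_large_margin_general {V : Type*} [Fintype V] [DecidableEq V]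
    (G0 : SimpleGraph V) (Vsrc Vld : Finset V)
    (hdisj : Vsrc ∩ Vld = ∅)
    (hedge : ∀ u v : V, G0.Adj u v →
      (u ∈ Vsrc ∧ v ∈ Vld) ∨ (u ∈ Vld ∧ v ∈ Vsrc))
    (α : ℝ) (hα : (Vsrc.card : ℝ) ≤ α) :
    ∀ S : Finset V,
      Fop Vsrc Vld G0 α (deleteVerts G0 S) = deleteVerts G0 S ∧
      Fstar Vsrc Vld G0 α (deleteVerts G0 S) = deleteVerts G0 S ∧
      (∀ t ∈ Vld,
        (∀ s ∈ Vsrc, s ≠ t →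
          ¬ (Fstar Vsrc Vld G0 α (deleteVerts G0 S)).Reachable t s) →
        t ∈ S ∨ ∀ h : V, G0.Adj t h → h ∈ S) := by
  intro S
  have hbip : G0.IsBipartiteWith Vsrc Vld :=
    ⟨by exact_mod_cast Finset.disjoint_iff_inter_eq_empty.mpr hdisj, hedge⟩
  have hFop := Fop_eq_self_of_le hbip (deleteVerts_le G0 S) hα
  have hFstar := Fstar_eq_self_of_Fop_eq_self hFop
  refine ⟨hFop, hFstar, fun t ht hcut => ?_⟩
  by_contra! ⟨htS, h, hth, hhS⟩
  have hadj : (deleteVerts G0 S).Adj t h := ⟨hth, htS, hhS⟩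
  refine hcut h (hbip.mem_of_mem_adj' (by exact_mod_cast ht) hth.symm) hadj.ne' ?_
  rw [hFstar]
  exact hadj.reachable

/-- When `G₀` is bipartite with sides exactly `V_src` and `V_ld` and `α ≥ |V_src|`,
deleting any set `S` of vertices triggers no cascading failure: `F(G₀ − S) = G₀ − S` and
`F*(G₀ − S) = G₀ − S`; consequently a load node becomes disconnected only if it is
attacked or all of its source neighbors are removed. -/
theorem no_cascade_of_bipartite_large_margin {V : Type*} [Fintype V] [DecidableEq V]
    (G0 : SimpleGraph V) (Vsrc Vld : Finset V)
    (hunion : Vsrc ∪ Vld = Finset.univ) (hdisj : Vsrc ∩ Vld = ∅)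
    (hedge : ∀ u v : V, G0.Adj u v →
      (u ∈ Vsrc ∧ v ∈ Vld) ∨ (u ∈ Vld ∧ v ∈ Vsrc))
    (α : ℝ) (hα : (Vsrc.card : ℝ) ≤ α) :
    ∀ S : Finset V,
      Fop Vsrc Vld G0 α (deleteVerts G0 S) = deleteVerts G0 S ∧
      Fstar Vsrc Vld G0 α (deleteVerts G0 S) = deleteVerts G0 S ∧
      (∀ t ∈ Vld,
        (∀ s ∈ Vsrc, s ≠ t →
          ¬ (Fstar Vsrc Vld G0 α (deleteVerts G0 S)).Reachable t s) →
        t ∈ S ∨ ∀ h : V, G0.Adj t h → h ∈ S) :=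
  no_cascade_of_bipartite_large_margin_general G0 Vsrc Vld hdisj hedge α hα

end
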